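/- For every integer m ≥ 0, π/4 = ∑_{n=0}^∞ ((−1)^n/(2n+1)) · L_{2m(2n+1)} · (2 / (L_{2m} + √(L_{2m}² + 4)))^{2n+1}, where the series on the right converges. -/

import Mathlib

open goldenRatio Real

/-- Lucas numbers: `L 0 = 2`, `L 1 = 1`, `L (n+2) = L (n+1) + L n`. -/
def lucasNum : ℕ → ℕ
  | 0 => 2
  | 1 => 1
  | n + 2 => lucasNum (n + 1) + lucasNum n

lemma lucasNum_binet : ∀ n : ℕ, (lucasNum n : ℝ) = φ ^ n + ψ ^ n
  | 0 => by norm_num [lucasNum]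
  | 1 => by
      simp only [lucasNum, Nat.cast_one, pow_one]
      rw [goldenRatio_add_goldenConj]
  | n + 2 => by
      have h1 := lucasNum_binet (n + 1)
      have h2 := lucasNum_binet n
      have hg : φ ^ (n + 2) = φ ^ (n + 1) + φ ^ n := by
        rw [pow_add, goldenRatio_sq, mul_add, mul_one, ← pow_succ]
      have hc : ψ ^ (n + 2) = ψ ^ (n + 1) + ψ ^ n := by
        rw [pow_add, goldenConj_sq, mul_add, mul_one, ← pow_succ]
      rw [lucasNum]
      push_cast
      rw [h1, h2, hg, hc]
      ring

theorem pi_div_four_lucas_series (m : ℕ) :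
    HasSum
      (fun n : ℕ => (-1 : ℝ) ^ n / (2 * (n : ℝ) + 1) *
        (lucasNum (2 * m * (2 * n + 1)) : ℝ) *
        (2 / ((lucasNum (2 * m) : ℝ) +
          Real.sqrt ((lucasNum (2 * m) : ℝ) ^ 2 + 4))) ^ (2 * n + 1))
      (Real.pi / 4) := by
  set A : ℝ := φ ^ (2 * m) with hA
  set B : ℝ := ψ ^ (2 * m) with hB
  have hAB : A * B = 1 := by
    rw [hA, hB, ← mul_pow, goldenRatio_mul_goldenConj]
    simp [pow_mul]
  have hA1 : 1 ≤ A := one_le_pow₀ one_lt_goldenRatio.le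
  have hBpos : 0 < B := by nlinarith
  have hB1 : B ≤ 1 := by nlinarith
  have hBA : B ≤ A := le_trans hB1 hA1
  set x : ℝ := (lucasNum (2 * m) : ℝ) with hx
  have hxAB : x = A + B := lucasNum_binet (2 * m)
  have hxpos : 0 < x := by rw [hxAB]; positivity
  set s : ℝ := Real.sqrt (x ^ 2 + 4) with hs
  have hs2 : s ^ 2 = x ^ 2 + 4 := Real.sq_sqrt (by positivity)
  have hspos : 0 < s := Real.sqrt_pos.2 (by positivity)
  set t : ℝ := 2 / (x + s) with ht
  have hxs : 0 < x + s := by positivity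
  have htpos : 0 < t := by positivity
  have hteq : t ^ 2 + x * t - 1 = 0 := by
    rw [ht]
    field_simp
    nlinarith [hs2]
  have hxt : x * t = 1 - t ^ 2 := by linarith
  have ht1 : t < 1 := by nlinarith
  have htB : t < B := by
    nlinarith [sq_nonneg (t - B), sq_nonneg B]
  have hAt : A * t < 1 := by
    calc A * t < A * B := by exact (mul_lt_mul_iff_right₀ (by linarith)).2 htB
    _ = 1 := hAB
  have hBt : B * t < 1 := by nlinarith
  have h1 : HasSum (fun n : ℕ => (-1 : ℝ) ^ n * (A * t) ^ (2 * n + 1) / ↑(2 * n + 1))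
      (Real.arctan (A * t)) := by
    apply Real.hasSum_arctan
    rw [Real.norm_eq_abs, abs_of_pos (by positivity)]
    exact hAt
  have h2 : HasSum (fun n : ℕ => (-1 : ℝ) ^ n * (B * t) ^ (2 * n + 1) / ↑(2 * n + 1))
      (Real.arctan (B * t)) := by
    apply Real.hasSum_arctan
    rw [Real.norm_eq_abs, abs_of_pos (by positivity)]
    exact hBt
  have hsum := h1.add h2
  have harct : Real.arctan (A * t) + Real.arctan (B * t) = Real.pi / 4 := by
    have hprod : (A * t) * (B * t) < 1 := by nlinarith
    rw [Real.arctan_add hprod]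
    have : (A * t + B * t) / (1 - A * t * (B * t)) = 1 := by
      have h1t : 1 - A * t * (B * t) = x * t := by
        rw [hxt]; nlinarith [hAB]
      rw [h1t]
      rw [hxAB]
      field_simp
    rw [this, Real.arctan_one]
  rw [harct] at hsum
  apply hsum.congr_fun
  intro n
  have hL : (lucasNum (2 * m * (2 * n + 1)) : ℝ) = A ^ (2 * n + 1) + B ^ (2 * n + 1) := by
    rw [lucasNum_binet, hA, hB, ← pow_mul, ← pow_mul]
  rw [hL]
  push_cast
  rw [mul_pow, mul_pow]
  ring
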